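/- Let E: ℝ^D → ℝ be twice continuously differentiable with invertible Hessian at a strict local maximum m*, and let f, g: ℝ^D → ℝ be differentiable. Define m*_t for t = (t₀, t_f) near 0 as the local maximizer of E(m) + t₀ᵀm + t_f f(m) continuing m*. Then d g(m*_t)/dt_f |_{t=0} = ∇g(m*)ᵀ Σ̂ ∇f(m*), where Σ̂ = -(∇²E(m*))^{-1}. -/

import Mathlib

open Matrix

/-- A continuous linear functional on `Fin D → ℝ` is given by dot product with its
coefficient vector. -/
lemma clm_eq_dot {D : ℕ} (L : (Fin D → ℝ) →L[ℝ] ℝ) (w : Fin D → ℝ) :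
    L w = (fun i => L (Pi.single i 1)) ⬝ᵥ w := by
  have hw : w = ∑ i, w i • (Pi.single i 1 : Fin D → ℝ) := by
    funext j
    simp [Pi.single_apply, Finset.sum_apply]
  conv_lhs => rw [hw]
  rw [map_sum]
  simp [dotProduct, mul_comm]

lemma mulVec_norm_le {D : ℕ} (M : Matrix (Fin D) (Fin D) ℝ) (x : Fin D → ℝ) :
    ‖M.mulVec x‖ ≤ (∑ i, ∑ j, |M i j|) * ‖x‖ := by
  have hnn : 0 ≤ (∑ i, ∑ j, |M i j|) * ‖x‖ :=
    mul_nonneg (Finset.sum_nonneg fun i _ => Finset.sum_nonneg fun j _ => abs_nonneg _)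
      (norm_nonneg _)
  rw [pi_norm_le_iff_of_nonneg hnn]
  intro i
  have h1 : ‖M.mulVec x i‖ ≤ ∑ j, |M i j| * ‖x‖ := by
    rw [Matrix.mulVec, dotProduct]
    refine (norm_sum_le _ _).trans (Finset.sum_le_sum fun j _ => ?_)
    rw [Real.norm_eq_abs, abs_mul]
    exact mul_le_mul_of_nonneg_left (norm_le_pi_norm x j) (abs_nonneg _)
  refine h1.trans ?_
  rw [← Finset.sum_mul]
  refine mul_le_mul_of_nonneg_right ?_ (norm_nonneg _)
  exact Finset.single_le_sum (f := fun i => ∑ j, |M i j|)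
    (fun i _ => Finset.sum_nonneg fun j _ => abs_nonneg _) (Finset.mem_univ i)

lemma dot_abs_le {D : ℕ} (x y : Fin D → ℝ) : |x ⬝ᵥ y| ≤ (D : ℝ) * ‖x‖ * ‖y‖ := by
  rw [dotProduct]
  refine (Finset.abs_sum_le_sum_abs _ _).trans ?_
  have : ∀ i ∈ Finset.univ (α := Fin D), |x i * y i| ≤ ‖x‖ * ‖y‖ := by
    intro i _
    rw [abs_mul]
    exact mul_le_mul (norm_le_pi_norm x i) (norm_le_pi_norm y i) (abs_nonneg _) (norm_nonneg _)
  refine (Finset.sum_le_sum this).trans ?_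
  simp [mul_assoc]


lemma arith_stage1 {c η₀ Dr na T V EE dd ffd QQ : ℝ}
    (hc : 0 < c) (hη : η₀ = c / 8)
    (hG : 0 ≤ EE + dd + ffd)
    (he1 : EE ≤ QQ / 2 + η₀ * V ^ 2)
    (he2 : dd ≤ Dr * T * V)
    (he3 : ffd ≤ T * (η₀ * V + Dr * na * V))
    (hQ : QQ ≤ -c * V ^ 2) :
    (3 * c / 8) * V ^ 2 ≤ (Dr * (1 + na) + η₀) * T * V := by
  subst hη
  nlinarith

lemma arith_div {A K V : ℝ} (h : A * V ^ 2 ≤ K * V) (hV : 0 < V) : A * V ≤ K := by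
  nlinarith

lemma arith_sq {w b : ℝ} (h : w ^ 2 ≤ b ^ 2) (hw : 0 ≤ w) (hb : 0 ≤ b) : w ≤ b := by
  nlinarith

lemma arith_recip {cc V : ℝ} (hcc : 0 < cc) : V = (8 / (3 * cc)) * ((3 * cc / 8) * V) := by
  field_simp

lemma arith_assoc {cc C T : ℝ} : (8 / (3 * cc)) * (C * T) = (8 * C / (3 * cc)) * T := by
  ring

lemma arith_interior {C r T : ℝ} (hC : 0 < C) (hr : 0 < r) (hT : 0 ≤ T)
    (h : T < r / (C + 1)) : C * T < r := by
  rw [lt_div_iff₀ (by linarith)] at h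
  nlinarith

lemma arith_interior2 {C r T V : ℝ} (hC : 0 < C) (h : V ≤ C * T) (hT : T < r / C) : V < r := by
  rw [lt_div_iff₀ hC] at hT
  nlinarith

lemma arith_le_div {C Cs T d : ℝ} (h1 : 0 < Cs) (hCC : C ≤ Cs) (hT : 0 ≤ T)
    (h : T ≤ d / Cs) : C * T ≤ d := by
  rw [le_div_iff₀ h1] at h
  nlinarith

set_option maxHeartbeats 1600000 in
lemma arith_stage2 {c η η' C3 C1 T V Vh W R1 R2 Rf1 Rf2 t2 QW : ℝ}
    (hc : 0 < c)
    (hopt : 0 ≤ QW / 2 + (R1 - R2) + t2 * (Rf1 - Rf2))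
    (hQW : QW ≤ -c * W ^ 2)
    (hR1 : |R1| ≤ η * V ^ 2) (hR2 : |R2| ≤ η * Vh ^ 2)
    (hRf1 : |Rf1| ≤ η * V) (hRf2 : |Rf2| ≤ η * Vh)
    (ht2 : |t2| ≤ T)
    (hV : V ≤ C3 * T) (hVh : Vh ≤ C1 * T)
    (hVnn : 0 ≤ V) (hVhnn : 0 ≤ Vh) (hTnn : 0 ≤ T)
    (hηle : η ≤ c * η' ^ 2 / (2 * (C3 ^ 2 + C1 ^ 2 + C3 + C1)))
    (hηpos : 0 < η) (hη' : 0 < η') (hC3 : 0 < C3) (hC1 : 0 < C1) :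
    W ^ 2 ≤ (η' * T) ^ 2 := by
  have hK : 0 < C3 ^ 2 + C1 ^ 2 + C3 + C1 := by positivity
  have e0 : t2 * (Rf1 - Rf2) ≤ T * (η * V + η * Vh) := by
    calc t2 * (Rf1 - Rf2) ≤ |t2 * (Rf1 - Rf2)| := le_abs_self _
      _ = |t2| * |Rf1 - Rf2| := abs_mul _ _
      _ ≤ T * (η * V + η * Vh) := by
          refine mul_le_mul ht2 ?_ (abs_nonneg _) (by linarith [abs_nonneg t2])
          have habs : |Rf1 - Rf2| ≤ |Rf1| + |Rf2| := by
            rw [sub_eq_add_neg]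
            exact (abs_add_le _ _).trans (by rw [abs_neg])
          exact habs.trans (add_le_add hRf1 hRf2)
  have h1 : c / 2 * W ^ 2 ≤ η * V ^ 2 + η * Vh ^ 2 + T * (η * V) + T * (η * Vh) := by
    have hr1 := (abs_le.mp hR1).2
    have hr2 := (abs_le.mp hR2).1
    nlinarith
  have p1 : η * V ^ 2 ≤ η * (C3 * T) ^ 2 :=
    mul_le_mul_of_nonneg_left (pow_le_pow_left₀ hVnn hV 2) hηpos.le
  have p2 : η * Vh ^ 2 ≤ η * (C1 * T) ^ 2 :=
    mul_le_mul_of_nonneg_left (pow_le_pow_left₀ hVhnn hVh 2) hηpos.le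
  have p3 : T * (η * V) ≤ T * (η * (C3 * T)) :=
    mul_le_mul_of_nonneg_left (mul_le_mul_of_nonneg_left hV hηpos.le) hTnn
  have p4 : T * (η * Vh) ≤ T * (η * (C1 * T)) :=
    mul_le_mul_of_nonneg_left (mul_le_mul_of_nonneg_left hVh hηpos.le) hTnn
  have h2 : η * V ^ 2 + η * Vh ^ 2 + T * (η * V) + T * (η * Vh)
      ≤ η * (C3 ^ 2 + C1 ^ 2 + C3 + C1) * T ^ 2 := by nlinarith
  have h3 : η * (C3 ^ 2 + C1 ^ 2 + C3 + C1) ≤ c * η' ^ 2 / 2 := by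
    have := mul_le_mul_of_nonneg_right hηle hK.le
    calc η * (C3 ^ 2 + C1 ^ 2 + C3 + C1)
        ≤ c * η' ^ 2 / (2 * (C3 ^ 2 + C1 ^ 2 + C3 + C1)) * (C3 ^ 2 + C1 ^ 2 + C3 + C1) := this
      _ = c * η' ^ 2 / 2 := by field_simp
  have h4 : η * (C3 ^ 2 + C1 ^ 2 + C3 + C1) * T ^ 2 ≤ c * η' ^ 2 / 2 * T ^ 2 :=
    mul_le_mul_of_nonneg_right h3 (sq_nonneg T)
  nlinarith [sq_nonneg T]


lemma quadExpand {D : ℕ} {E : (Fin D → ℝ) → ℝ} {mstar : Fin D → ℝ}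
    {B : (Fin D → ℝ) →L[ℝ] (Fin D → ℝ) →L[ℝ] ℝ}
    (hΦ : ∀ y, HasFDerivAt E (fderiv ℝ E y) y)
    (hB : HasFDerivAt (fderiv ℝ E) B mstar)
    (hgrad0 : fderiv ℝ E mstar = 0)
    (hsym : ∀ v w, B v w = B w v)
    {η : ℝ} (hη : 0 < η) :
    ∃ δ > 0, ∀ v : Fin D → ℝ, ‖v‖ ≤ δ →
      |E (mstar + v) - E mstar - B v v / 2| ≤ η * ‖v‖ ^ 2 := by
  have hlo := hB.isLittleO
  rw [Asymptotics.isLittleO_iff] at hlo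
  have hev := hlo hη
  rw [Metric.eventually_nhds_iff] at hev
  obtain ⟨δ', hδ'pos, hδ'⟩ := hev
  refine ⟨δ' / 2, by positivity, fun v hv => ?_⟩
  -- the function whose increment we estimate
  set F : (Fin D → ℝ) → ℝ := fun u => E (mstar + u) - B u u / 2 with hF
  set F' : (Fin D → ℝ) → ((Fin D → ℝ) →L[ℝ] ℝ) := fun u => fderiv ℝ E (mstar + u) - B u with hF'
  have hFderiv : ∀ u, HasFDerivAt F (F' u) u := by
    intro u
    have h1 : HasFDerivAt (fun u => E (mstar + u)) (fderiv ℝ E (mstar + u)) u := by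
      have haff : HasFDerivAt (fun u : Fin D → ℝ => mstar + u)
          (ContinuousLinearMap.id ℝ (Fin D → ℝ)) u := (hasFDerivAt_id u).const_add mstar
      have := (hΦ (mstar + u)).comp u haff
      rw [ContinuousLinearMap.comp_id] at this; exact this
    have h2 : HasFDerivAt (fun u => B u u) ((B u).comp (ContinuousLinearMap.id ℝ _)
        + B.flip u) u := by
      exact (B.hasFDerivAt (x := u)).clm_apply (hasFDerivAt_id u)
    have h2' : HasFDerivAt (fun u => B u u) (2 • B u) u := by
      convert h2 using 1
      ext w
      simp [two_smul, hsym u w, ContinuousLinearMap.flip_apply]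
    have h3 : HasFDerivAt (fun u => B u u / 2) (B u) u := by
      have heq : (fun u => B u u / 2) = fun u => (1/2 : ℝ) * (B u u) := by
        funext u'; ring
      have hder : ((1:ℝ)/2) • ((2:ℕ) • B u) = B u := by
        ext w; simp
      rw [heq, ← hder]
      exact h2'.const_mul ((1:ℝ)/2)
    exact h1.sub h3
  have hbound : ∀ u ∈ segment ℝ (0 : Fin D → ℝ) v, ‖F' u‖ ≤ η * ‖v‖ := by
    intro u hu
    have hun : ‖u‖ ≤ ‖v‖ := by
      have : u ∈ Metric.closedBall (0 : Fin D → ℝ) ‖v‖ := by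
        refine (convex_closedBall _ _).segment_subset ?_ ?_ hu
        · simp
        · simp [mem_closedBall_iff_norm]
      simpa [mem_closedBall_iff_norm] using this
    have hd : dist (mstar + u) mstar < δ' := by
      rw [dist_eq_norm]
      simp only [add_sub_cancel_left]
      calc ‖u‖ ≤ ‖v‖ := hun
        _ ≤ δ' / 2 := hv
        _ < δ' := by linarith
    have := hδ' hd
    rw [hgrad0] at this
    simp only [add_sub_cancel_left, ContinuousLinearMap.sub_apply] at this
    have heq : fderiv ℝ E (mstar + u) - (0 : _) - B u = F' u := by
      simp [hF']
    rw [heq] at this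
    calc ‖F' u‖ ≤ η * ‖u‖ := this
      _ ≤ η * ‖v‖ := by exact mul_le_mul_of_nonneg_left hun (le_of_lt hη)
  have hmvt := Convex.norm_image_sub_le_of_norm_hasFDerivWithin_le
    (f := F) (f' := F') (s := segment ℝ (0 : Fin D → ℝ) v) (C := η * ‖v‖)
    (fun u hu => (hFderiv u).hasFDerivWithinAt) hbound (convex_segment _ _)
    (left_mem_segment ℝ 0 v) (right_mem_segment ℝ 0 v)
  have hF0 : F 0 = E mstar := by simp [hF]
  rw [hF0] at hmvt
  have : ‖F v - E mstar‖ ≤ η * ‖v‖ * ‖v‖ := by simpa using hmvt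
  calc |E (mstar + v) - E mstar - B v v / 2| = ‖F v - E mstar‖ := by
        rw [Real.norm_eq_abs]; simp only [hF]; ring_nf
    _ ≤ η * ‖v‖ * ‖v‖ := this
    _ = η * ‖v‖ ^ 2 := by ring

set_option maxHeartbeats 16000000 in
/-- Linear response covariance of functions: perturbing the objective by `t₀ᵀm + t_f f(m)`
and following the local maximizer `m*_t`, the derivative of `g(m*_t)` in `t_f` at `0`
equals `∇g(m*)ᵀ Σ̂ ∇f(m*)` with `Σ̂ = -(∇²E(m*))⁻¹`. -/
theorem stmt13 (D : ℕ) (E f g : (Fin D → ℝ) → ℝ) (mstar : Fin D → ℝ)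
    (hE : ContDiff ℝ 2 E)
    (hmax : ∃ U ∈ nhds mstar, ∀ m ∈ U, m ≠ mstar → E m < E mstar)
    (hf : Differentiable ℝ f) (hg : Differentiable ℝ g)
    (H : Matrix (Fin D) (Fin D) ℝ)
    (hH : ∀ i j, H i j = fderiv ℝ (fun m => fderiv ℝ E m (Pi.single j 1)) mstar (Pi.single i 1))
    (hHinv : IsUnit H.det) :
    ∃ ε > (0 : ℝ), ∃ φ : ((Fin D → ℝ) × ℝ) → (Fin D → ℝ),
      φ 0 = mstar ∧ DifferentiableAt ℝ φ 0 ∧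
      (∀ t : (Fin D → ℝ) × ℝ, ‖t‖ < ε →
        IsLocalMax (fun m => E m + t.1 ⬝ᵥ m + t.2 * f m) (φ t)) ∧
      deriv (fun s : ℝ => g (φ (0, s))) 0
        = (fun i => fderiv ℝ g mstar (Pi.single i 1)) ⬝ᵥ
            (-(H⁻¹)).mulVec (fun i => fderiv ℝ f mstar (Pi.single i 1)) := by
  have hE1 : Differentiable ℝ E := hE.differentiable two_ne_zero
  have hΦ : ∀ y, HasFDerivAt E (fderiv ℝ E y) y := fun y => (hE1 y).hasFDerivAt
  have hΦc1 : ContDiff ℝ 1 (fderiv ℝ E) := hE.fderiv_right (by norm_num)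
  set B := fderiv ℝ (fderiv ℝ E) mstar with hBdef
  have hB : HasFDerivAt (fderiv ℝ E) B mstar := (hΦc1.differentiable one_ne_zero mstar).hasFDerivAt
  have hsym : ∀ v w, B v w = B w v := second_derivative_symmetric hΦ hB
  have hlocmax : IsLocalMax E mstar := by
    obtain ⟨U, hU, hUlt⟩ := hmax
    filter_upwards [hU] with m hm
    by_cases hmm : m = mstar
    · simp [hmm]
    · exact le_of_lt (hUlt m hm hmm)
  have hgrad0 : fderiv ℝ E mstar = 0 := hlocmax.fderiv_eq_zero
  -- H is the second derivative matrix
  have hHB : ∀ i j, H i j = B (Pi.single i 1) (Pi.single j 1) := by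
    intro i j
    rw [hH]
    have hd : HasFDerivAt (fun m => fderiv ℝ E m (Pi.single j 1))
        ((fderiv ℝ E mstar).comp (0 : (Fin D → ℝ) →L[ℝ] (Fin D → ℝ))
          + B.flip (Pi.single j 1)) mstar :=
      hB.clm_apply (hasFDerivAt_const (Pi.single j 1) mstar)
    rw [hd.fderiv]
    simp [ContinuousLinearMap.flip_apply]
  have hsymH : ∀ i j, H i j = H j i := fun i j => by rw [hHB, hHB, hsym]
  -- bridge to the matrix quadratic form
  have hBdot : ∀ v w : Fin D → ℝ, B v w = v ⬝ᵥ H.mulVec w := by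
    intro v w
    have h1 : B v w = (fun j => B v (Pi.single j 1)) ⬝ᵥ w := clm_eq_dot (B v) w
    have h2 : ∀ j, B v (Pi.single j 1) = (fun i => B (Pi.single i 1) (Pi.single j 1)) ⬝ᵥ v :=
      fun j => clm_eq_dot (B.flip (Pi.single j 1)) v
    rw [h1]
    simp only [h2]
    simp only [dotProduct, Matrix.mulVec, ← hHB]
    simp only [Finset.sum_mul, Finset.mul_sum]
    rw [Finset.sum_comm]
    congr 1; funext i
    congr 1; funext j
    ring
  -- the quadratic form
  set Q : (Fin D → ℝ) → ℝ := fun v => v ⬝ᵥ H.mulVec v with hQdef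
  have hQB : ∀ v, Q v = B v v := fun v => (hBdot v v).symm
  have hsymdot : ∀ x y : Fin D → ℝ, x ⬝ᵥ H.mulVec y = y ⬝ᵥ H.mulVec x := by
    intro x y; rw [← hBdot, ← hBdot, hsym]
  have hQsmul : ∀ (s : ℝ) (v : Fin D → ℝ), Q (s • v) = s ^ 2 * Q v := by
    intro s v
    simp only [hQdef, Matrix.mulVec_smul, smul_dotProduct, dotProduct_smul,
      smul_eq_mul]
    ring
  have hNH : ∀ x : Fin D → ℝ, H.mulVec ((-(H⁻¹)).mulVec x) = -x := by
    intro x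
    rw [Matrix.mulVec_mulVec, Matrix.mul_neg, Matrix.mul_nonsing_inv _ hHinv,
      Matrix.neg_mulVec, Matrix.one_mulVec]
  -- negative semidefiniteness
  have hρ := Metric.eventually_nhds_iff.mp hlocmax
  obtain ⟨ρ, hρpos, hρle⟩ := hρ
  have hQle : ∀ v : Fin D → ℝ, Q v ≤ 0 := by
    intro v
    by_contra hvpos
    push_neg at hvpos
    have hv0 : v ≠ 0 := by
      intro hv; rw [hv] at hvpos; simp [hQdef] at hvpos
    have hvn : 0 < ‖v‖ := norm_pos_iff.mpr hv0
    have hη : 0 < Q v / (8 * ‖v‖ ^ 2) := by positivity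
    obtain ⟨δ, hδpos, hδ⟩ := quadExpand hΦ hB hgrad0 hsym hη
    set s : ℝ := min δ (ρ / 2) / ‖v‖ with hsdef
    have hspos : 0 < s := by positivity
    set w : Fin D → ℝ := s • v with hwdef
    have hwn : ‖w‖ = min δ (ρ / 2) := by
      rw [hwdef, norm_smul, Real.norm_eq_abs, abs_of_pos hspos, hsdef,
        div_mul_cancel₀ _ (ne_of_gt hvn)]
    have hwδ : ‖w‖ ≤ δ := by rw [hwn]; exact min_le_left _ _
    have hwρ : dist (mstar + w) mstar < ρ := by
      rw [dist_eq_norm, add_sub_cancel_left, hwn]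
      calc min δ (ρ / 2) ≤ ρ / 2 := min_le_right _ _
        _ < ρ := by linarith
    have h1 := hδ w hwδ
    have h2 : E (mstar + w) ≤ E mstar := hρle hwρ
    have h3 : B w w / 2 ≤ Q v / (8 * ‖v‖ ^ 2) * ‖w‖ ^ 2 := by
      have := abs_le.mp h1
      linarith [this.2]
    have h4 : Q w = s ^ 2 * Q v := by rw [hwdef, hQsmul]
    have h5 : ‖w‖ ^ 2 = s ^ 2 * ‖v‖ ^ 2 := by
      rw [hwdef, norm_smul, Real.norm_eq_abs]
      rw [mul_pow, sq_abs]
    rw [← hQB, h4] at h3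
    rw [h5] at h3
    have hs2 : 0 < s ^ 2 := by positivity
    have : Q v / (8 * ‖v‖ ^ 2) * (s ^ 2 * ‖v‖ ^ 2) = s ^ 2 * Q v / 8 := by
      field_simp
    rw [this] at h3
    nlinarith [mul_pos hs2 hvpos]
  -- negative definiteness
  have hQlt : ∀ v : Fin D → ℝ, v ≠ 0 → Q v < 0 := by
    intro v hv
    rcases lt_or_eq_of_le (hQle v) with h | h
    · exact h
    exfalso
    have hall : ∀ (w : Fin D → ℝ) (s : ℝ),
        2 * s * (v ⬝ᵥ H.mulVec w) + s ^ 2 * Q w ≤ 0 := by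
      intro w s
      have hle := hQle (v + s • w)
      have hexp : Q (v + s • w)
          = Q v + s * (v ⬝ᵥ H.mulVec w) + s * (w ⬝ᵥ H.mulVec v) + s ^ 2 * Q w := by
        simp only [hQdef, Matrix.mulVec_add, Matrix.mulVec_smul, dotProduct_add,
          add_dotProduct, dotProduct_smul, smul_dotProduct, smul_eq_mul]
        ring
      rw [hexp, hsymdot w v, ← h] at hle
      linarith
    have hd0 : ∀ w : Fin D → ℝ, v ⬝ᵥ H.mulVec w = 0 := by
      intro w
      set d : ℝ := v ⬝ᵥ H.mulVec w with hddef
      have hA : Q w ≤ 0 := hQle w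
      have hApos : 0 < 1 - Q w := by linarith
      set u : ℝ := 1 / (1 - Q w) with hu
      have hupos : 0 < u := by positivity
      have h1 := hall w (d * u)
      have hsub : u * Q w = u - 1 := by
        rw [hu]; field_simp; ring
      have hexpand : 2 * (d * u) * d + (d * u) ^ 2 * Q w = d ^ 2 * u * (1 + u) := by
        have h2 : (d * u) ^ 2 * Q w = d ^ 2 * u * (u * Q w) := by ring
        rw [h2, hsub]; ring
      rw [← hddef, hexpand] at h1
      have hd2 : d ^ 2 ≤ 0 := by
        nlinarith [mul_pos hupos (by linarith : (0:ℝ) < 1 + u)]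
      have hdz : d ^ 2 = 0 := le_antisymm hd2 (sq_nonneg d)
      exact (pow_eq_zero_iff (by norm_num : (2:ℕ) ≠ 0)).mp hdz
    have hw := hd0 ((H⁻¹).mulVec v)
    rw [Matrix.mulVec_mulVec, Matrix.mul_nonsing_inv _ hHinv, Matrix.one_mulVec] at hw
    exact hv ((dotProduct_self_eq_zero).mp hw)
  have hQ0 : Q 0 = 0 := by simp [hQdef]
  -- uniform negative definiteness constant
  have hc : ∃ c : ℝ, 0 < c ∧ ∀ v : Fin D → ℝ, Q v ≤ -c * ‖v‖ ^ 2 := by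
    rcases Nat.eq_zero_or_pos D with hD | hD
    · refine ⟨1, one_pos, fun v => ?_⟩
      have hv0 : v = 0 := by subst hD; funext i; exact i.elim0
      rw [hv0, hQ0]; simp
    · have hQcont : Continuous Q := by
        rw [hQdef]
        simp only [dotProduct, Matrix.mulVec]
        exact continuous_finset_sum _ fun i _ => (continuous_apply i).mul
          (continuous_finset_sum _ fun j _ => continuous_const.mul (continuous_apply j))
      have hx₀ : (Pi.single (⟨0, hD⟩ : Fin D) 1 : Fin D → ℝ) ∈ Metric.sphere (0 : Fin D → ℝ) 1 := by
        simp [mem_sphere_zero_iff_norm, Pi.norm_single]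
      obtain ⟨v₀, hv₀mem, hv₀max⟩ := (isCompact_sphere (0 : Fin D → ℝ) 1).exists_isMaxOn
        ⟨_, hx₀⟩ hQcont.continuousOn
      rw [isMaxOn_iff] at hv₀max
      have hv₀norm : ‖v₀‖ = 1 := by simpa [mem_sphere_zero_iff_norm] using hv₀mem
      have hv₀ne : v₀ ≠ 0 := by
        intro h0; rw [h0] at hv₀norm; simp at hv₀norm
      refine ⟨-Q v₀, by linarith [hQlt v₀ hv₀ne], fun v => ?_⟩
      by_cases hv : v = 0
      · rw [hv, hQ0]; simp
      · have hvn : 0 < ‖v‖ := norm_pos_iff.mpr hv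
        have hmem : ‖v‖⁻¹ • v ∈ Metric.sphere (0 : Fin D → ℝ) 1 := by
          simp [mem_sphere_zero_iff_norm, norm_smul, abs_of_pos (inv_pos.mpr hvn),
            inv_mul_cancel₀ (ne_of_gt hvn)]
        have hle := hv₀max _ hmem
        rw [hQsmul] at hle
        have h2 : Q v = ‖v‖ ^ 2 * (‖v‖⁻¹ ^ 2 * Q v) := by
          field_simp
        rw [h2]
        calc ‖v‖ ^ 2 * (‖v‖⁻¹ ^ 2 * Q v) ≤ ‖v‖ ^ 2 * Q v₀ :=
              mul_le_mul_of_nonneg_left hle (by positivity)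
          _ = -(-Q v₀) * ‖v‖ ^ 2 := by ring
  obtain ⟨c, hcpos, hQc⟩ := hc
  -- gradient coefficient vector of f
  set a : Fin D → ℝ := fun i => fderiv ℝ f mstar (Pi.single i 1) with hadef
  have hfa : ∀ v : Fin D → ℝ, fderiv ℝ f mstar v = a ⬝ᵥ v :=
    fun v => clm_eq_dot (fderiv ℝ f mstar) v
  set N : Matrix (Fin D) (Fin D) ℝ := -(H⁻¹) with hNdef
  set Sa : ℝ := ∑ i, ∑ j, |N i j| with hSadef
  have hSann : 0 ≤ Sa :=
    Finset.sum_nonneg fun i _ => Finset.sum_nonneg fun j _ => abs_nonneg _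
  set Ca : ℝ := 1 + ‖a‖ with hCadef
  have hCa1 : 1 ≤ Ca := by rw [hCadef]; linarith [norm_nonneg a]
  set lvec : (Fin D → ℝ) × ℝ → (Fin D → ℝ) := fun t => t.1 + t.2 • a with hldef
  have hlle : ∀ t, ‖lvec t‖ ≤ Ca * ‖t‖ := by
    intro t
    have h1 : ‖t.1‖ ≤ ‖t‖ := norm_fst_le t
    have h2 : ‖t.2 • a‖ = ‖t.2‖ * ‖a‖ := norm_smul _ _
    have h3 : ‖t.2‖ ≤ ‖t‖ := norm_snd_le t
    calc ‖lvec t‖ ≤ ‖t.1‖ + ‖t.2 • a‖ := norm_add_le _ _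
      _ ≤ ‖t‖ + ‖t‖ * ‖a‖ := by
          rw [h2]
          have := mul_le_mul_of_nonneg_right h3 (norm_nonneg a)
          linarith
      _ = Ca * ‖t‖ := by rw [hCadef]; ring
  set vhat : (Fin D → ℝ) × ℝ → (Fin D → ℝ) := fun t => N.mulVec (lvec t) with hvhatdef
  set C₁ : ℝ := Sa * Ca + 1 with hC₁def
  have hC₁pos : 0 < C₁ := by rw [hC₁def]; nlinarith
  have hvhatle : ∀ t, ‖vhat t‖ ≤ C₁ * ‖t‖ := by
    intro t
    calc ‖vhat t‖ ≤ Sa * ‖lvec t‖ := mulVec_norm_le N _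
      _ ≤ Sa * (Ca * ‖t‖) := mul_le_mul_of_nonneg_left (hlle t) hSann
      _ ≤ C₁ * ‖t‖ := by rw [hC₁def]; nlinarith [norm_nonneg t]
  set η₀ : ℝ := c / 8 with hη₀def
  have hη₀pos : 0 < η₀ := by rw [hη₀def]; positivity
  obtain ⟨δE, hδEpos, hδE⟩ := quadExpand hΦ hB hgrad0 hsym hη₀pos
  -- first order expansion of f
  have hfexp : ∀ η : ℝ, 0 < η → ∃ δ > 0, ∀ v : Fin D → ℝ, ‖v‖ ≤ δ →
      |f (mstar + v) - f mstar - a ⬝ᵥ v| ≤ η * ‖v‖ := by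
    intro η hη
    have hlo := (hf mstar).hasFDerivAt.isLittleO
    rw [Asymptotics.isLittleO_iff] at hlo
    obtain ⟨δ', hδ'pos, hδ'⟩ := Metric.eventually_nhds_iff.mp (hlo hη)
    refine ⟨δ' / 2, by positivity, fun v hv => ?_⟩
    have hd : dist (mstar + v) mstar < δ' := by
      rw [dist_eq_norm, add_sub_cancel_left]; linarith
    have h := hδ' hd
    rw [add_sub_cancel_left, hfa] at h
    simpa [Real.norm_eq_abs] using h
  obtain ⟨δf, hδfpos, hδf⟩ := hfexp η₀ hη₀pos
  -- radius of the ball on which we take argmaxes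
  set r : ℝ := min (min δE δf) (ρ / 2) with hrdef
  have hrpos : 0 < r := by
    rw [hrdef]
    exact lt_min (lt_min hδEpos hδfpos) (by linarith)
  have hrδE : r ≤ δE := (min_le_left _ _).trans (min_le_left _ _)
  have hrδf : r ≤ δf := (min_le_left _ _).trans (min_le_right _ _)
  have hrρ : r < ρ := lt_of_le_of_lt (min_le_right _ _) (by linarith)
  set S : Set (Fin D → ℝ) := Metric.closedBall mstar r with hSdef
  have hmstarS : mstar ∈ S := Metric.mem_closedBall_self hrpos.le
  set G : (Fin D → ℝ) × ℝ → (Fin D → ℝ) → ℝ := fun t m => E m + t.1 ⬝ᵥ m + t.2 * f m with hGdef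
  have hGcont : ∀ t, Continuous (G t) := by
    intro t
    apply Continuous.add
    apply Continuous.add hE.continuous
    · show Continuous fun m : Fin D → ℝ => ∑ i, t.1 i * m i
      exact continuous_finset_sum _ fun i _ => continuous_const.mul (continuous_apply i)
    · exact continuous_const.mul hf.continuous
  have hargmax : ∀ t, ∃ m ∈ S, IsMaxOn (G t) S m := fun t =>
    (isCompact_closedBall mstar r).exists_isMaxOn ⟨mstar, hmstarS⟩ (hGcont t).continuousOn
  choose ψ hψS hψmax using hargmax
  set φ : (Fin D → ℝ) × ℝ → (Fin D → ℝ) := fun t => if t = 0 then mstar else ψ t with hφdef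
  have hφ0 : φ 0 = mstar := by rw [hφdef]; simp
  have hφS : ∀ t, φ t ∈ S := by
    intro t
    by_cases ht : t = 0
    · rw [hφdef]; simp [ht, hmstarS]
    · rw [hφdef]; simp only [ht, if_neg ht]; exact hψS t
  have hφmax : ∀ t, IsMaxOn (G t) S (φ t) := by
    intro t
    by_cases ht : t = 0
    · rw [hφdef]; simp only [ht, if_pos rfl]
      rw [isMaxOn_iff]
      intro x hx
      have hd : dist x mstar < ρ := lt_of_le_of_lt (Metric.mem_closedBall.mp hx) hrρ
      have := hρle hd
      simp [hGdef, zero_dotProduct]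
      simpa using this
    · rw [hφdef]; simp only [if_neg ht]; exact hψmax t
  have hDnn : (0 : ℝ) ≤ D := Nat.cast_nonneg D
  set C₂ : ℝ := D * Ca + η₀ with hC₂def
  have hC₂pos : 0 < C₂ := by rw [hC₂def]; nlinarith
  set C₃ : ℝ := 8 * C₂ / (3 * c) with hC₃def
  have hC₃pos : 0 < C₃ := by rw [hC₃def]; positivity
  -- Stage 1: a priori bound on the argmax displacement
  have hstage1 : ∀ t : (Fin D → ℝ) × ℝ, ‖φ t - mstar‖ ≤ C₃ * ‖t‖ := by
    intro t
    set v : Fin D → ℝ := φ t - mstar with hvdef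
    have hφt : φ t = mstar + v := by rw [hvdef]; abel
    have hvr : ‖v‖ ≤ r := by
      have h := hφS t
      rw [hSdef, Metric.mem_closedBall, dist_eq_norm] at h
      rw [hvdef]; exact h
    have hopt : G t mstar ≤ G t (φ t) := (isMaxOn_iff.mp (hφmax t)) mstar hmstarS
    rw [hφt] at hopt
    have hEq := hδE v (hvr.trans hrδE)
    have hEq' : |E (mstar + v) - E mstar - Q v / 2| ≤ η₀ * ‖v‖ ^ 2 := by
      rw [hQB]; exact hEq
    have hfq := hδf v (hvr.trans hrδf)
    have hQv := hQc v
    have hd1 : |t.1 ⬝ᵥ v| ≤ D * ‖t‖ * ‖v‖ := by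
      refine (dot_abs_le t.1 v).trans ?_
      gcongr
      · exact norm_fst_le t
    have hd2 : |a ⬝ᵥ v| ≤ D * ‖a‖ * ‖v‖ := dot_abs_le a v
    have ht2 : |t.2| ≤ ‖t‖ := by
      have := norm_snd_le t; rwa [Real.norm_eq_abs] at this
    have hGdiff : 0 ≤ (E (mstar + v) - E mstar) + t.1 ⬝ᵥ v
        + t.2 * (f (mstar + v) - f mstar) := by
      have h1 : G t mstar = E mstar + t.1 ⬝ᵥ mstar + t.2 * f mstar := rfl
      have h2 : G t (mstar + v) = E (mstar + v) + t.1 ⬝ᵥ (mstar + v) + t.2 * f (mstar + v) := rfl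
      rw [h1, h2, dotProduct_add] at hopt
      linarith
    have hfabs : |f (mstar + v) - f mstar| ≤ η₀ * ‖v‖ + D * ‖a‖ * ‖v‖ := by
      calc |f (mstar + v) - f mstar|
          = |(f (mstar + v) - f mstar - a ⬝ᵥ v) + a ⬝ᵥ v| := by ring_nf
        _ ≤ |f (mstar + v) - f mstar - a ⬝ᵥ v| + |a ⬝ᵥ v| := abs_add_le _ _
        _ ≤ η₀ * ‖v‖ + D * ‖a‖ * ‖v‖ := add_le_add hfq hd2
    have e1 : E (mstar + v) - E mstar ≤ Q v / 2 + η₀ * ‖v‖ ^ 2 := by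
      linarith [(abs_le.mp hEq').2]
    have e2 : t.1 ⬝ᵥ v ≤ D * ‖t‖ * ‖v‖ := le_trans (le_abs_self _) hd1
    have e3 : t.2 * (f (mstar + v) - f mstar) ≤ ‖t‖ * (η₀ * ‖v‖ + D * ‖a‖ * ‖v‖) := by
      calc t.2 * (f (mstar + v) - f mstar) ≤ |t.2 * (f (mstar + v) - f mstar)| := le_abs_self _
        _ = |t.2| * |f (mstar + v) - f mstar| := abs_mul _ _
        _ ≤ ‖t‖ * (η₀ * ‖v‖ + D * ‖a‖ * ‖v‖) :=
            mul_le_mul ht2 hfabs (abs_nonneg _) (norm_nonneg t)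
    have hkey : (3 * c / 8) * ‖v‖ ^ 2 ≤ C₂ * ‖t‖ * ‖v‖ := by
      rw [hC₂def, hCadef]
      exact arith_stage1 hcpos hη₀def hGdiff e1 e2 e3 hQv
    rcases eq_or_lt_of_le (norm_nonneg v) with hz | hz
    · rw [← hz]; positivity
    · have h8 : (3 * c / 8) * ‖v‖ ≤ C₂ * ‖t‖ := arith_div hkey hz
      calc ‖v‖ = (8 / (3 * c)) * ((3 * c / 8) * ‖v‖) := arith_recip hcpos
        _ ≤ (8 / (3 * c)) * (C₂ * ‖t‖) := mul_le_mul_of_nonneg_left h8 (by positivity)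
        _ = C₃ * ‖t‖ := by rw [hC₃def]; exact arith_assoc
  -- the neighbourhood size
  set ε : ℝ := min (r / (C₃ + 1)) (r / C₁) with hεdef
  have hεpos : 0 < ε := by
    rw [hεdef]
    exact lt_min (by positivity) (by positivity)
  have hint : ∀ t : (Fin D → ℝ) × ℝ, ‖t‖ < ε → ‖φ t - mstar‖ < r := by
    intro t ht
    refine lt_of_le_of_lt (hstage1 t) ?_
    exact arith_interior hC₃pos hrpos (norm_nonneg t)
      (lt_of_lt_of_le ht (min_le_left _ _))
  have hvhat_r : ∀ t : (Fin D → ℝ) × ℝ, ‖t‖ < ε → ‖vhat t‖ < r := by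
    intro t ht
    exact arith_interior2 hC₁pos (hvhatle t)
      (lt_of_lt_of_le ht (min_le_right _ _))
  -- the local maximum property
  have hISmax : ∀ t : (Fin D → ℝ) × ℝ, ‖t‖ < ε →
      IsLocalMax (fun m => E m + t.1 ⬝ᵥ m + t.2 * f m) (φ t) := by
    intro t ht
    have hmem : φ t ∈ Metric.ball mstar r := by
      rw [Metric.mem_ball, dist_eq_norm]; exact hint t ht
    have hnhds : S ∈ nhds (φ t) := by
      rw [hSdef]; exact Metric.closedBall_mem_nhds_of_mem hmem
    exact (hφmax t).isLocalMax hnhds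
  -- the derivative of φ at 0
  set Llin : ((Fin D → ℝ) × ℝ) →ₗ[ℝ] (Fin D → ℝ) :=
    (Matrix.mulVecLin N).comp
      ((LinearMap.fst ℝ (Fin D → ℝ) ℝ) + (LinearMap.snd ℝ (Fin D → ℝ) ℝ).smulRight a)
    with hLlindef
  set L : ((Fin D → ℝ) × ℝ) →L[ℝ] (Fin D → ℝ) := LinearMap.toContinuousLinearMap Llin
    with hLdef
  have hLapp : ∀ t, L t = vhat t := by
    intro t
    rw [hLdef]
    rw [LinearMap.coe_toContinuousLinearMap']
    rw [hLlindef]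
    simp [Matrix.mulVecLin_apply, hvhatdef, hldef]
  have hφderiv : HasFDerivAt φ L 0 := by
    rw [hasFDerivAt_iff_isLittleO_nhds_zero]
    rw [Asymptotics.isLittleO_iff]
    intro η' hη'
    set K : ℝ := C₃ ^ 2 + C₁ ^ 2 + C₃ + C₁ with hKdef
    have hKpos : 0 < K := by rw [hKdef]; positivity
    set η : ℝ := min η₀ (c * η' ^ 2 / (2 * K)) with hηdef
    have hηpos : 0 < η := by
      rw [hηdef]
      exact lt_min hη₀pos (by positivity)
    obtain ⟨δE', hδE'pos, hδE'⟩ := quadExpand hΦ hB hgrad0 hsym hηpos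
    obtain ⟨δf', hδf'pos, hδf'⟩ := hfexp η hηpos
    set δ' : ℝ := min δE' δf' with hδ'def
    have hδ'pos : 0 < δ' := lt_min hδE'pos hδf'pos
    set ε' : ℝ := min ε (δ' / (C₃ + C₁)) with hε'def
    have hε'pos : 0 < ε' := lt_min hεpos (by positivity)
    rw [Metric.eventually_nhds_iff]
    refine ⟨ε', hε'pos, fun t htd => ?_⟩
    rw [dist_zero_right] at htd
    have htε : ‖t‖ < ε := lt_of_lt_of_le htd (min_le_left _ _)
    have htδ : ‖t‖ ≤ δ' / (C₃ + C₁) := le_of_lt (lt_of_lt_of_le htd (min_le_right _ _))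
    simp only [zero_add, hφ0]
    rw [hLapp]
    set v : Fin D → ℝ := φ t - mstar with hvdef
    set w : Fin D → ℝ := v - vhat t with hwdef
    have hφt : φ t = mstar + v := by rw [hvdef]; abel
    have hvC₃ : ‖v‖ ≤ C₃ * ‖t‖ := hstage1 t
    have hvhC₁ : ‖vhat t‖ ≤ C₁ * ‖t‖ := hvhatle t
    have hvδ : ‖v‖ ≤ δ' :=
      hvC₃.trans (arith_le_div (by positivity) (by linarith) (norm_nonneg t) htδ)
    have hvhδ : ‖vhat t‖ ≤ δ' :=
      hvhC₁.trans (arith_le_div (by positivity) (by linarith) (norm_nonneg t) htδ)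
    -- expansions
    have A1 : |E (mstar + v) - E mstar - Q v / 2| ≤ η * ‖v‖ ^ 2 := by
      rw [hQB]; exact hδE' v (hvδ.trans (min_le_left _ _))
    have A2 : |E (mstar + vhat t) - E mstar - Q (vhat t) / 2| ≤ η * ‖vhat t‖ ^ 2 := by
      rw [hQB]; exact hδE' (vhat t) (hvhδ.trans (min_le_left _ _))
    have A3 : |f (mstar + v) - f mstar - a ⬝ᵥ v| ≤ η * ‖v‖ :=
      hδf' v (hvδ.trans (min_le_right _ _))
    have A4 : |f (mstar + vhat t) - f mstar - a ⬝ᵥ vhat t| ≤ η * ‖vhat t‖ :=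
      hδf' (vhat t) (hvhδ.trans (min_le_right _ _))
    -- optimality against the comparison point
    have hmemvhat : mstar + vhat t ∈ S := by
      rw [hSdef, Metric.mem_closedBall, dist_eq_norm, add_sub_cancel_left]
      exact le_of_lt (hvhat_r t htε)
    have hopt2 : G t (mstar + vhat t) ≤ G t (mstar + v) := by
      have := (isMaxOn_iff.mp (hφmax t)) _ hmemvhat
      rwa [hφt] at this
    have hGexp : ∀ x : Fin D → ℝ, G t (mstar + x)
        = E mstar + t.1 ⬝ᵥ mstar + t.2 * f mstar + (Q x / 2 + lvec t ⬝ᵥ x)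
          + (E (mstar + x) - E mstar - Q x / 2)
          + t.2 * (f (mstar + x) - f mstar - a ⬝ᵥ x) := by
      intro x
      have hladd : lvec t ⬝ᵥ x = t.1 ⬝ᵥ x + t.2 * (a ⬝ᵥ x) := by
        rw [hldef]
        simp [add_dotProduct, smul_dotProduct, smul_eq_mul]
      simp only [hGdef, dotProduct_add]
      rw [hladd]; ring
    have hopt2' : 0 ≤ (Q v / 2 + lvec t ⬝ᵥ v) - (Q (vhat t) / 2 + lvec t ⬝ᵥ vhat t)
        + ((E (mstar + v) - E mstar - Q v / 2) - (E (mstar + vhat t) - E mstar - Q (vhat t) / 2))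
        + t.2 * ((f (mstar + v) - f mstar - a ⬝ᵥ v)
            - (f (mstar + vhat t) - f mstar - a ⬝ᵥ vhat t)) := by
      have h := hopt2
      rw [hGexp v, hGexp (vhat t)] at h
      linarith
    -- key algebraic identity
    have hveq : v = vhat t + w := by rw [hwdef]; abel
    have hQexp : Q v = Q (vhat t) + vhat t ⬝ᵥ H.mulVec w + w ⬝ᵥ H.mulVec (vhat t) + Q w := by
      simp only [hQdef]
      rw [hveq]
      simp only [Matrix.mulVec_add, dotProduct_add, add_dotProduct]
      ring
    have hdl : lvec t ⬝ᵥ v - lvec t ⬝ᵥ vhat t = lvec t ⬝ᵥ w := by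
      rw [hveq]
      simp only [dotProduct_add]
      ring
    have hHvh : H.mulVec (vhat t) = -(lvec t) := by
      rw [hvhatdef]
      exact hNH (lvec t)
    have hs4 : w ⬝ᵥ H.mulVec (vhat t) = -(lvec t ⬝ᵥ w) := by
      rw [hHvh, dotProduct_neg, dotProduct_comm]
    have hs3 : vhat t ⬝ᵥ H.mulVec w = w ⬝ᵥ H.mulVec (vhat t) := hsymdot _ _
    have hkeyid : (Q v / 2 + lvec t ⬝ᵥ v) - (Q (vhat t) / 2 + lvec t ⬝ᵥ vhat t) = Q w / 2 := by
      linear_combination hQexp / 2 + hdl + hs3 / 2 + hs4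
    have hfinal : 0 ≤ Q w / 2
        + ((E (mstar + v) - E mstar - Q v / 2) - (E (mstar + vhat t) - E mstar - Q (vhat t) / 2))
        + t.2 * ((f (mstar + v) - f mstar - a ⬝ᵥ v)
            - (f (mstar + vhat t) - f mstar - a ⬝ᵥ vhat t)) := by
      rw [← hkeyid]; exact hopt2'
    have hQw : Q w ≤ -c * ‖w‖ ^ 2 := hQc w
    have ht2 : |t.2| ≤ ‖t‖ := by
      have := norm_snd_le t; rwa [Real.norm_eq_abs] at this
    have hηle : η ≤ c * η' ^ 2 / (2 * K) := by rw [hηdef]; exact min_le_right _ _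
    have hW2 : ‖w‖ ^ 2 ≤ (η' * ‖t‖) ^ 2 := by
      rw [hKdef] at hηle
      exact arith_stage2 hcpos hfinal hQw A1 A2 A3 A4 ht2 hvC₃ hvhC₁
        (norm_nonneg v) (norm_nonneg _) (norm_nonneg t) hηle hηpos hη' hC₃pos hC₁pos
    exact arith_sq hW2 (norm_nonneg w) (by positivity)
  -- assemble
  refine ⟨ε, hεpos, φ, hφ0, hφderiv.differentiableAt, hISmax, ?_⟩
  have hcurve : HasDerivAt (fun s : ℝ => ((0 : Fin D → ℝ), s)) ((0 : Fin D → ℝ), (1 : ℝ)) 0 :=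
    (hasDerivAt_const (x := (0 : ℝ)) (c := (0 : Fin D → ℝ))).prodMk (hasDerivAt_id 0)
  have hφcurve : HasDerivAt (fun s : ℝ => φ ((0 : Fin D → ℝ), s)) (L ((0 : Fin D → ℝ), 1)) 0 :=
    hφderiv.comp_hasDerivAt 0 hcurve
  have hg0 : HasFDerivAt g (fderiv ℝ g mstar) (φ ((0 : Fin D → ℝ), (0 : ℝ))) := by
    have h00 : φ ((0 : Fin D → ℝ), (0 : ℝ)) = mstar := hφ0
    rw [h00]
    exact (hg mstar).hasFDerivAt
  have hgc : HasDerivAt (fun s : ℝ => g (φ ((0 : Fin D → ℝ), s)))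
      (fderiv ℝ g mstar (L ((0 : Fin D → ℝ), 1))) 0 :=
    hg0.comp_hasDerivAt 0 hφcurve
  rw [hgc.deriv]
  have hL01 : L ((0 : Fin D → ℝ), (1 : ℝ)) = N.mulVec a := by
    rw [hLapp]
    show N.mulVec ((0 : Fin D → ℝ) + (1 : ℝ) • a) = N.mulVec a
    simp
  rw [hL01, clm_eq_dot (fderiv ℝ g mstar) (N.mulVec a)]
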